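/- arXiv:1201.0658 — 2 statements merged into one kernel-verified Lean document; each statement's English description precedes it below -/
import Mathlib

section
/- Let w, w̃ be positive non-decreasing weight functions with diverging sums such that w(x)/w̃(x) → 1 as x → ∞. Then α_c(w) = α_c(w̃). -/
open MeasureTheory Filter Topology Set
open scoped ENNReal NNReal

noncomputable section

/-- Extension of a weight sequence to the reals: `w(t) = w(⌊t⌋)` (and `w 0` for `t < 0`). -/
def wext (w : ℕ → ℝ) (t : ℝ) : ℝ := w ⌊t⌋₊

/-- `W(t) = ∫₀ᵗ du / w(u)`. -/
def Wfun (v : ℝ → ℝ) (t : ℝ) : ℝ := ∫ u in (0:ℝ)..t, (v u)⁻¹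

/-- `I_α(w) = ∫₀^∞ dx / w(W⁻¹(W(x)+α))`, valued in `[0,∞]`. -/
def Ia (v : ℝ → ℝ) (Winv : ℝ → ℝ) (α : ℝ) : ℝ≥0∞ :=
  ∫⁻ x in Ioi (0:ℝ), ENNReal.ofReal (v (Winv (Wfun v x + α)))⁻¹

/-- The critical parameter `α_c(w) = inf {α ≥ 0 : I_α(w) < ∞} ∈ [0,∞]` (inf ∅ = ∞). -/
def alphac (v : ℝ → ℝ) (Winv : ℝ → ℝ) : ℝ≥0∞ :=
  sInf (ENNReal.ofReal '' {α : ℝ | 0 < α ∧ Ia v Winv α < ⊤})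

/-!
If `w ≤ c·w̃` beyond some `N`, then past `N` the function `W̃` grows at most `c` times as fast
as `W`. Hence the point `W̃⁻¹(W̃(x) + cα)` lies beyond `W⁻¹(W(x) + α)`, and by monotonicity the
integrand of `I_{cα}(w̃)` is at most `c` times that of `I_α(w)` on `(N, ∞)`; on `(0, N]` it is
bounded. So `α_c(w̃) ≤ c·α_c(w)` for every `c > 1`, and `w/w̃ → 1` gives this in both directions.
-/

lemma setLIntegral_Ioi_lt_top_of_le {f : ℝ → ℝ≥0∞} {M : ℝ≥0∞} (hM : M ≠ ⊤) (hf : ∀ x, f x ≤ M)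
    {a b : ℝ} (hb : ∫⁻ x in Ioi b, f x < ⊤) : ∫⁻ x in Ioi a, f x < ⊤ := by
  have hIoc : ∫⁻ x in Ioc a b, f x < ⊤ :=
    calc ∫⁻ x in Ioc a b, f x ≤ ∫⁻ _ in Ioc a b, M := lintegral_mono hf
      _ = M * volume (Ioc a b) := setLIntegral_const _ _
      _ < ⊤ := ENNReal.mul_lt_top hM.lt_top (by simp [Real.volume_Ioc])
  calc ∫⁻ x in Ioi a, f x ≤ ∫⁻ x in Ioc a b ∪ Ioi b, f x :=
        lintegral_mono_set fun x hx => (le_or_gt x b).imp (fun h => ⟨hx, h⟩) id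
    _ ≤ (∫⁻ x in Ioc a b, f x) + ∫⁻ x in Ioi b, f x := lintegral_union_le _ _ _
    _ < ⊤ := ENNReal.add_lt_top.mpr ⟨hIoc, hb⟩

lemma sInf_ofReal_image_le_mul {S T : Set ℝ} {c : ℝ} (hc : 0 < c)
    (hST : ∀ β ∈ S, c * β ∈ T) :
    sInf (ENNReal.ofReal '' T) ≤ ENNReal.ofReal c * sInf (ENNReal.ofReal '' S) := by
  rw [sInf_image, sInf_image, ENNReal.mul_iInf_of_ne (by simpa using hc) ENNReal.ofReal_ne_top]
  refine le_iInf fun β => ?_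
  rw [ENNReal.mul_iInf_of_ne (by simpa using hc) ENNReal.ofReal_ne_top]
  refine le_iInf fun hβ => ?_
  rw [← ENNReal.ofReal_mul hc.le]
  exact iInf₂_le _ (hST β hβ)

lemma le_of_forall_one_lt_le_ofReal_mul {A B : ℝ≥0∞}
    (h : ∀ c : ℝ, 1 < c → A ≤ ENNReal.ofReal c * B) : A ≤ B := by
  refine ENNReal.le_of_forall_lt_one_mul_le fun a ha => ?_
  rcases eq_or_ne a 0 with rfl | ha0
  · simp
  have ha_top : a ≠ ⊤ := ha.ne_top
  have hc : 1 < a.toReal⁻¹ :=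
    one_lt_inv_iff₀.mpr ⟨ENNReal.toReal_pos ha0 ha_top, ENNReal.toReal_lt_of_lt_ofReal (by simpa)⟩
  calc a * A ≤ a * (a⁻¹ * B) := by
        gcongr
        simpa [ENNReal.ofReal_inv_of_pos (ENNReal.toReal_pos ha0 ha_top), ha_top] using h _ hc
    _ = B := ENNReal.mul_inv_cancel_left ha0 ha_top

lemma eventually_le_mul_of_tendsto_div {a b : ℕ → ℝ} (hb : ∀ n, 0 < b n)
    (h : Tendsto (fun n => a n / b n) atTop (𝓝 1)) {c : ℝ} (hc : 1 < c) :
    ∀ᶠ n in atTop, a n ≤ c * b n := by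
  filter_upwards [h.eventually_lt_const hc] with n hn
  rw [div_lt_iff₀ (hb n)] at hn
  exact hn.le

section Weight

variable {w wt : ℕ → ℝ} {Winv WinvT : ℝ → ℝ}

lemma wext_monotone (hmono : Monotone w) : Monotone (wext w) :=
  fun _ _ h => hmono (Nat.floor_mono h)

lemma intervalIntegrable_inv_wext (hpos : ∀ n, 0 < w n) (hmono : Monotone w) (a b : ℝ) :
    IntervalIntegrable (fun u => (wext w u)⁻¹) volume a b :=
  Antitone.intervalIntegrable fun _ _ hab => inv_anti₀ (hpos _) (wext_monotone hmono hab)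

lemma Wfun_eq_add_integral (hpos : ∀ n, 0 < w n) (hmono : Monotone w) (a b : ℝ) :
    Wfun (wext w) b = Wfun (wext w) a + ∫ u in a..b, (wext w u)⁻¹ :=
  (intervalIntegral.integral_add_adjacent_intervals
    (intervalIntegrable_inv_wext hpos hmono 0 a) (intervalIntegrable_inv_wext hpos hmono a b)).symm

lemma Wfun_strictMono (hpos : ∀ n, 0 < w n) (hmono : Monotone w) :
    StrictMono (Wfun (wext w)) := by
  intro a b hab
  have hinc : 0 < ∫ u in a..b, (wext w u)⁻¹ :=
    intervalIntegral.intervalIntegral_pos_of_pos (intervalIntegrable_inv_wext hpos hmono a b)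
      (fun _ => inv_pos.mpr (hpos _)) hab
  linarith [Wfun_eq_add_integral hpos hmono a b]

lemma Wfun_nonneg (hpos : ∀ n, 0 < w n) {t : ℝ} (ht : 0 ≤ t) : 0 ≤ Wfun (wext w) t :=
  intervalIntegral.integral_nonneg ht fun _ _ => (inv_pos.mpr (hpos _)).le

lemma le_Winv_Wfun_add (hpos : ∀ n, 0 < w n) (hmono : Monotone w)
    (hWinv : ∀ y, 0 ≤ y → Wfun (wext w) (Winv y) = y) {x β : ℝ} (hx : 0 ≤ x) (hβ : 0 ≤ β) :
    x ≤ Winv (Wfun (wext w) x + β) := by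
  rw [← (Wfun_strictMono hpos hmono).le_iff_le,
    hWinv _ (add_nonneg (Wfun_nonneg hpos hx) hβ)]
  linarith

lemma inv_wext_le_mul_inv_wext (hpos : ∀ n, 0 < w n) (hposT : ∀ n, 0 < wt n) {c : ℝ} {N : ℕ}
    (hdom : ∀ n, N ≤ n → w n ≤ c * wt n) {u : ℝ} (hu : (N : ℝ) ≤ u) :
    (wext wt u)⁻¹ ≤ c * (wext w u)⁻¹ := by
  have hw : 0 < wext w u := hpos _
  have hwt : 0 < wext wt u := hposT _
  rw [← div_eq_mul_inv, inv_eq_one_div, div_le_div_iff₀ hwt hw, one_mul]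
  exact hdom _ (Nat.le_floor hu)

lemma integral_inv_wext_le_mul (hpos : ∀ n, 0 < w n) (hposT : ∀ n, 0 < wt n)
    (hmono : Monotone w) (hmonoT : Monotone wt) {c : ℝ} {N : ℕ}
    (hdom : ∀ n, N ≤ n → w n ≤ c * wt n) {x y : ℝ} (hx : (N : ℝ) ≤ x) (hxy : x ≤ y) :
    ∫ u in x..y, (wext wt u)⁻¹ ≤ c * ∫ u in x..y, (wext w u)⁻¹ := by
  rw [← intervalIntegral.integral_const_mul]
  exact intervalIntegral.integral_mono_on hxy (intervalIntegrable_inv_wext hposT hmonoT x y)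
    ((intervalIntegrable_inv_wext hpos hmono x y).const_mul c)
    fun u hu => inv_wext_le_mul_inv_wext hpos hposT hdom (hx.trans hu.1)

lemma inv_wext_Winv_le_mul (hpos : ∀ n, 0 < w n) (hposT : ∀ n, 0 < wt n)
    (hmono : Monotone w) (hmonoT : Monotone wt)
    (hWinv : ∀ y, 0 ≤ y → Wfun (wext w) (Winv y) = y)
    (hWinvT : ∀ y, 0 ≤ y → Wfun (wext wt) (WinvT y) = y)
    {c : ℝ} (hc : 0 < c) {N : ℕ} (hdom : ∀ n, N ≤ n → w n ≤ c * wt n)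
    {α : ℝ} (hα : 0 ≤ α) {x : ℝ} (hx : (N : ℝ) ≤ x) :
    (wext wt (WinvT (Wfun (wext wt) x + c * α)))⁻¹
      ≤ c * (wext w (Winv (Wfun (wext w) x + α)))⁻¹ := by
  have hx0 : 0 ≤ x := (Nat.cast_nonneg N).trans hx
  set g := Winv (Wfun (wext w) x + α)
  set g' := WinvT (Wfun (wext wt) x + c * α)
  have hxg : x ≤ g := le_Winv_Wfun_add hpos hmono hWinv hx0 hα
  have hxg' : x ≤ g' := le_Winv_Wfun_add hposT hmonoT hWinvT hx0 (by positivity)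
  have hgg' : g ≤ g' := by
    have hincT : ∫ u in x..g', (wext wt u)⁻¹ = c * α := by
      have := Wfun_eq_add_integral hposT hmonoT x g'
      rw [hWinvT _ (add_nonneg (Wfun_nonneg hposT hx0) (by positivity))] at this
      linarith
    have hα_le : α ≤ ∫ u in x..g', (wext w u)⁻¹ := by
      have := integral_inv_wext_le_mul hpos hposT hmono hmonoT hdom hx hxg'
      rw [hincT] at this
      exact le_of_mul_le_mul_left this hc
    rw [← (Wfun_strictMono hpos hmono).le_iff_le,
      hWinv _ (add_nonneg (Wfun_nonneg hpos hx0) hα), Wfun_eq_add_integral hpos hmono x g']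
    linarith
  calc (wext wt g')⁻¹ ≤ (wext wt g)⁻¹ := inv_anti₀ (hposT _) (wext_monotone hmonoT hgg')
    _ ≤ c * (wext w g)⁻¹ := inv_wext_le_mul_inv_wext hpos hposT hdom (hx.trans hxg)

lemma Ia_mul_lt_top (hpos : ∀ n, 0 < w n) (hposT : ∀ n, 0 < wt n)
    (hmono : Monotone w) (hmonoT : Monotone wt)
    (hWinv : ∀ y, 0 ≤ y → Wfun (wext w) (Winv y) = y)
    (hWinvT : ∀ y, 0 ≤ y → Wfun (wext wt) (WinvT y) = y)
    {c : ℝ} (hc : 0 < c) {N : ℕ} (hdom : ∀ n, N ≤ n → w n ≤ c * wt n)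
    {α : ℝ} (hα : 0 ≤ α) (hfin : Ia (wext w) Winv α < ⊤) :
    Ia (wext wt) WinvT (c * α) < ⊤ := by
  refine setLIntegral_Ioi_lt_top_of_le (M := ENNReal.ofReal (wt 0)⁻¹) ENNReal.ofReal_ne_top
    (fun _ => ENNReal.ofReal_le_ofReal (inv_anti₀ (hposT 0) (hmonoT (Nat.zero_le _))))
    (b := N) ?_
  calc _ ≤ ∫⁻ x in Ioi (N : ℝ),
          ENNReal.ofReal c * ENNReal.ofReal (wext w (Winv (Wfun (wext w) x + α)))⁻¹ := by
        refine setLIntegral_mono' measurableSet_Ioi fun x hx => ?_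
        rw [← ENNReal.ofReal_mul hc.le]
        exact ENNReal.ofReal_le_ofReal
          (inv_wext_Winv_le_mul hpos hposT hmono hmonoT hWinv hWinvT hc hdom hα hx.le)
    _ = ENNReal.ofReal c * ∫⁻ x in Ioi (N : ℝ),
          ENNReal.ofReal (wext w (Winv (Wfun (wext w) x + α)))⁻¹ :=
        lintegral_const_mul' _ _ ENNReal.ofReal_ne_top
    _ ≤ ENNReal.ofReal c * Ia (wext w) Winv α := by
        gcongr
        exact lintegral_mono_set (Ioi_subset_Ioi (Nat.cast_nonneg N))
    _ < ⊤ := ENNReal.mul_lt_top ENNReal.ofReal_lt_top hfin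

lemma alphac_le_of_eventually_le_mul (hpos : ∀ n, 0 < w n)
    (hposT : ∀ n, 0 < wt n) (hmono : Monotone w) (hmonoT : Monotone wt)
    (hWinv : ∀ y, 0 ≤ y → Wfun (wext w) (Winv y) = y)
    (hWinvT : ∀ y, 0 ≤ y → Wfun (wext wt) (WinvT y) = y)
    (hdom : ∀ c : ℝ, 1 < c → ∀ᶠ n in atTop, w n ≤ c * wt n) :
    alphac (wext wt) WinvT ≤ alphac (wext w) Winv := by
  refine le_of_forall_one_lt_le_ofReal_mul fun c hc => ?_
  obtain ⟨N, hN⟩ := eventually_atTop.mp (hdom c hc)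
  have hc0 : 0 < c := one_pos.trans hc
  exact sInf_ofReal_image_le_mul hc0
    (fun β hβ => ⟨mul_pos hc0 hβ.1,
      Ia_mul_lt_top hpos hposT hmono hmonoT hWinv hWinvT hc0 hN hβ.1.le hβ.2⟩)

end Weight

theorem stmt6_general (w wt : ℕ → ℝ) (hpos : ∀ n, 0 < w n) (hposT : ∀ n, 0 < wt n)
    (hmono : Monotone w) (hmonoT : Monotone wt)
    (hequiv : Tendsto (fun n : ℕ => w n / wt n) atTop (nhds 1))
    (Winv WinvT : ℝ → ℝ)
    (hWinv' : ∀ y : ℝ, 0 ≤ y → Wfun (wext w) (Winv y) = y)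
    (hWinvT' : ∀ y : ℝ, 0 ≤ y → Wfun (wext wt) (WinvT y) = y) :
    alphac (wext w) Winv = alphac (wext wt) WinvT := by
  have hequiv' : Tendsto (fun n : ℕ => wt n / w n) atTop (nhds 1) := by
    simpa using hequiv.inv₀ one_ne_zero
  refine le_antisymm ?_ ?_
  · exact alphac_le_of_eventually_le_mul hposT hpos hmonoT hmono hWinvT' hWinv'
      fun c hc => eventually_le_mul_of_tendsto_div hpos hequiv' hc
  · exact alphac_le_of_eventually_le_mul hpos hposT hmono hmonoT hWinv' hWinvT'
      fun c hc => eventually_le_mul_of_tendsto_div hposT hequiv hc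

/-- asymptotic equivalence: if `w(x)/w̃(x) → 1` then `α_c(w) = α_c(w̃)`. -/
theorem stmt6 (w wt : ℕ → ℝ) (hpos : ∀ n, 0 < w n) (hposT : ∀ n, 0 < wt n)
    (hmono : Monotone w) (hmonoT : Monotone wt)
    (hdiv : ¬ Summable (fun n : ℕ => (w n)⁻¹))
    (hdivT : ¬ Summable (fun n : ℕ => (wt n)⁻¹))
    (hequiv : Tendsto (fun n : ℕ => w n / wt n) atTop (nhds 1))
    (Winv WinvT : ℝ → ℝ)
    (hWinv : ∀ t : ℝ, 0 ≤ t → Winv (Wfun (wext w) t) = t)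
    (hWinv' : ∀ y : ℝ, 0 ≤ y → Wfun (wext w) (Winv y) = y)
    (hWinvT : ∀ t : ℝ, 0 ≤ t → WinvT (Wfun (wext wt) t) = t)
    (hWinvT' : ∀ y : ℝ, 0 ≤ y → Wfun (wext wt) (WinvT y) = y) :
    alphac (wext w) Winv = alphac (wext wt) WinvT :=
  stmt6_general w wt hpos hposT hmono hmonoT hequiv Winv WinvT hWinv' hWinvT'
end
end

section
/- Let w be a positive non-decreasing weight function with ∑ 1/w(n) = ∞. If w(n)/(n log log n) → ∞ as n → ∞, then α_c(w) = 0; if c⁻¹ n log log n ≤ w(n) ≤ c n log log n for some c > 0 and all large n, then α_c(w) ∈ (0,∞); and if w(n)/(n log log n) → 0, then α_c(w) = ∞. -/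
/-!
Write `y = W⁻¹(W(x) + α)`, so that `∫ₓʸ du / w(u) = α`. If `w(u) ≥ K u log log u` for large `u`,
then for `t = x (log x)^(Kα)` the integral `∫ₓᵗ du / w(u)` is at most `α`, hence `y ≥ t` and
`1 / w(y) ≤ 1 / (K x (log x)^(Kα))`, which is integrable at infinity as soon as `Kα > 1`.
If `w(u) ≤ ε u log log u` for large `u` and `δ = 2εα < 1`, then for `t = x (log x)^δ` one has
`log log t ≤ 2 log log x`, so `∫ₓᵗ du / w(u) ≥ α`, hence `y ≤ t` and
`1 / w(y) ≥ 1 / (2ε x (log x)^δ log log x)`, which is not integrable at infinity.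
Bounds on `w(n) / (n log log n)` transfer to the extended weight `u ↦ w(⌊u⌋)` up to a factor
`4`, because `⌊u⌋ log log ⌊u⌋ ≤ u log log u ≤ 4 ⌊u⌋ log log ⌊u⌋` for large `u`.
-/

open MeasureTheory Filter Topology Set
open scoped ENNReal NNReal

noncomputable section

open Real

section LogLog

lemma exp_one_le_log {x : ℝ} (hx : exp (exp 1) ≤ x) : exp 1 ≤ log x :=
  (le_log_iff_exp_le ((exp_pos _).trans_le hx)).2 hx

lemma one_le_log {x : ℝ} (hx : exp (exp 1) ≤ x) : 1 ≤ log x :=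
  (one_le_exp zero_le_one).trans (exp_one_le_log hx)

lemma one_le_log_log {x : ℝ} (hx : exp (exp 1) ≤ x) : 1 ≤ log (log x) :=
  (le_log_iff_exp_le ((exp_pos 1).trans_le (exp_one_le_log hx))).2 (exp_one_le_log hx)

lemma log_log_le_log_log {x y : ℝ} (hx : 1 < x) (hxy : x ≤ y) : log (log x) ≤ log (log y) :=
  log_le_log (log_pos hx) (log_le_log (by linarith) hxy)

lemma log_log_le_two_mul_log_log {x y : ℝ} (hx : exp (exp 1) ≤ x) (hy : 1 ≤ y)
    (hyx : y ≤ x ^ 2) : log (log y) ≤ 2 * log (log x) := by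
  have hL : 1 ≤ log (log x) := one_le_log_log hx
  have hlogx : 0 < log x := log_pos (one_lt_exp_iff.2 (exp_pos 1) |>.trans_le hx)
  rcases (log_nonneg hy).eq_or_lt with hlogy | hlogy
  · rw [← hlogy, log_zero]; linarith
  · have hlog : log y ≤ 2 * log x := by
      simpa [log_pow] using log_le_log (by linarith) hyx
    calc log (log y) ≤ log (2 * log x) := log_le_log hlogy hlog
      _ = log 2 + log (log x) := log_mul two_ne_zero hlogx.ne'
      _ ≤ 2 * log (log x) := by linarith [log_two_lt_d9]

lemma eventually_pos_mul_log_log : ∀ᶠ x : ℝ in atTop, 0 < x * log (log x) := by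
  filter_upwards [eventually_ge_atTop (exp (exp 1))] with x hx
  exact mul_pos ((exp_pos _).trans_le hx) (one_pos.trans_le (one_le_log_log hx))

lemma eventually_mul_log_log_le_floor :
    ∀ᶠ u : ℝ in atTop, u * log (log u) ≤ 4 * (⌊u⌋₊ * log (log ⌊u⌋₊)) := by
  filter_upwards [eventually_ge_atTop (exp (exp 1) + 1)] with u hu
  have he : exp 1 + 1 ≤ exp (exp 1) := add_one_le_exp _
  have he1 : 2 < exp 1 := by linarith [exp_one_gt_d9]
  have hfloor : u - 1 < ⌊u⌋₊ := Nat.sub_one_lt_floor u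
  have hn : exp (exp 1) ≤ ⌊u⌋₊ := by linarith
  have hsq : u ≤ (⌊u⌋₊ : ℝ) ^ 2 := by nlinarith
  have hL := log_log_le_two_mul_log_log hn (by linarith) hsq
  have hu0 : 0 ≤ log (log u) := zero_le_one.trans (one_le_log_log (by linarith))
  calc u * log (log u) ≤ (2 * ⌊u⌋₊) * (2 * log (log ⌊u⌋₊)) :=
        mul_le_mul (by linarith) hL hu0 (by linarith)
    _ = 4 * (⌊u⌋₊ * log (log ⌊u⌋₊)) := by ring

lemma eventually_floor_mul_log_log_le :
    ∀ᶠ u : ℝ in atTop, ⌊u⌋₊ * log (log ⌊u⌋₊) ≤ u * log (log u) := by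
  filter_upwards [eventually_ge_atTop (exp (exp 1) + 1)] with u hu
  have hfloor : u - 1 < ⌊u⌋₊ := Nat.sub_one_lt_floor u
  have hn : exp (exp 1) ≤ ⌊u⌋₊ := by linarith
  have hn1 : (1 : ℝ) < ⌊u⌋₊ := one_lt_exp_iff.2 (exp_pos 1) |>.trans_le hn
  have hnu : (⌊u⌋₊ : ℝ) ≤ u := Nat.floor_le (by linarith [exp_pos (exp 1)])
  exact mul_le_mul hnu (log_log_le_log_log hn1 hnu)
    (zero_le_one.trans (one_le_log_log hn)) (by linarith)

end LogLog

section Asymptotics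

variable {ι : Type*} {l : Filter ι} {f g : ι → ℝ}

lemma eventually_mul_le_of_tendsto_div_atTop (hg : ∀ᶠ i in l, 0 < g i)
    (h : Tendsto (fun i => f i / g i) l atTop) (C : ℝ) : ∀ᶠ i in l, C * g i ≤ f i := by
  filter_upwards [hg, h.eventually_ge_atTop C] with i hgi hi
  rwa [le_div_iff₀ hgi] at hi

lemma eventually_le_mul_of_tendsto_div_zero (hg : ∀ᶠ i in l, 0 < g i)
    (h : Tendsto (fun i => f i / g i) l (𝓝 0)) {c : ℝ} (hc : 0 < c) :
    ∀ᶠ i in l, f i ≤ c * g i := by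
  filter_upwards [hg, h.eventually (gt_mem_nhds hc)] with i hgi hi
  rw [div_lt_iff₀ hgi] at hi
  linarith

end Asymptotics

lemma integrableOn_Ioi_inv_mul_log_rpow_iff {a s : ℝ} (ha : 1 < a) :
    IntegrableOn (fun x => x⁻¹ * log x ^ s) (Ioi a) ↔ s < -1 := by
  rw [← integrableOn_Ioi_rpow_iff (log_pos ha)]
  simpa only [smul_eq_mul] using integrableOn_comp_log_Ioi (fun y => y ^ s) (by linarith)

lemma lintegral_Ioi_inv_mul_log_rpow_eq_top {a s : ℝ} (ha : 1 < a) (hs : -1 ≤ s) :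
    ∫⁻ x in Ioi a, ENNReal.ofReal (x⁻¹ * log x ^ s) = ⊤ := by
  by_contra h
  have hnn : 0 ≤ᵐ[volume.restrict (Ioi a)] fun x => x⁻¹ * log x ^ s :=
    ae_restrict_of_forall_mem measurableSet_Ioi fun x hx => by
      have hx1 : 1 < x := ha.trans hx
      have := log_pos hx1
      have : 0 < x := by linarith
      positivity
  have hint := (lintegral_ofReal_ne_top_iff_integrable
    (by fun_prop : Measurable fun x : ℝ => x⁻¹ * log x ^ s).aestronglyMeasurable hnn).1 h
  exact not_lt.2 hs ((integrableOn_Ioi_inv_mul_log_rpow_iff ha).1 hint)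

section Wfun

variable {v Winv : ℝ → ℝ}

lemma intervalIntegrable_inv_of_monotone (hv : ∀ u, 0 < v u) (hmono : Monotone v) (a b : ℝ) :
    IntervalIntegrable (fun u => (v u)⁻¹) volume a b :=
  Antitone.intervalIntegrable fun _ _ h => inv_anti₀ (hv _) (hmono h)

lemma Wfun_add_integral (hv : ∀ u, 0 < v u) (hmono : Monotone v) (a b : ℝ) :
    Wfun v a + ∫ u in a..b, (v u)⁻¹ = Wfun v b :=
  intervalIntegral.integral_add_adjacent_intervals
    (intervalIntegrable_inv_of_monotone hv hmono 0 a)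
    (intervalIntegrable_inv_of_monotone hv hmono a b)

lemma Wfun_strictMono_s8 (hv : ∀ u, 0 < v u) (hmono : Monotone v) : StrictMono (Wfun v) := by
  intro a b hab
  have hpos : 0 < ∫ u in a..b, (v u)⁻¹ :=
    intervalIntegral.intervalIntegral_pos_of_pos_on
      (intervalIntegrable_inv_of_monotone hv hmono a b) (fun u _ => inv_pos.2 (hv u)) hab
  linarith [Wfun_add_integral hv hmono a b]

lemma Wfun_nonneg_s8 (hv : ∀ u, 0 < v u) {x : ℝ} (hx : 0 ≤ x) : 0 ≤ Wfun v x :=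
  intervalIntegral.integral_nonneg hx fun u _ => (inv_pos.2 (hv u)).le

lemma Winv_nonneg (hv : ∀ u, 0 < v u) (hmono : Monotone v)
    (hWinv' : ∀ y, 0 ≤ y → Wfun v (Winv y) = y) {y : ℝ} (hy : 0 ≤ y) : 0 ≤ Winv y := by
  have h0 : Wfun v 0 = 0 := intervalIntegral.integral_same
  rw [← (Wfun_strictMono_s8 hv hmono).le_iff_le, hWinv' y hy, h0]
  exact hy

lemma le_Winv_of_integral_le (hv : ∀ u, 0 < v u) (hmono : Monotone v)
    (hWinv' : ∀ y, 0 ≤ y → Wfun v (Winv y) = y) {x t α : ℝ} (hx : 0 ≤ x) (hα : 0 ≤ α)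
    (h : ∫ u in x..t, (v u)⁻¹ ≤ α) : t ≤ Winv (Wfun v x + α) := by
  rw [← (Wfun_strictMono_s8 hv hmono).le_iff_le, hWinv' _ (add_nonneg (Wfun_nonneg_s8 hv hx) hα),
    ← Wfun_add_integral hv hmono x t]
  linarith

lemma Winv_le_of_le_integral (hv : ∀ u, 0 < v u) (hmono : Monotone v)
    (hWinv' : ∀ y, 0 ≤ y → Wfun v (Winv y) = y) {x t α : ℝ} (hx : 0 ≤ x) (hα : 0 ≤ α)
    (h : α ≤ ∫ u in x..t, (v u)⁻¹) : Winv (Wfun v x + α) ≤ t := by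
  rw [← (Wfun_strictMono_s8 hv hmono).le_iff_le, hWinv' _ (add_nonneg (Wfun_nonneg_s8 hv hx) hα),
    ← Wfun_add_integral hv hmono x t]
  linarith

lemma integral_const_mul_inv {x t : ℝ} (c : ℝ) (hx : 0 < x) (hxt : x ≤ t) :
    ∫ u in x..t, c * u⁻¹ = c * log (t / x) := by
  rw [intervalIntegral.integral_const_mul, integral_inv_of_pos hx (hx.trans_le hxt)]

lemma intervalIntegrable_const_mul_inv {x t : ℝ} (c : ℝ) (hx : 0 < x) (hxt : x ≤ t) :
    IntervalIntegrable (fun u => c * u⁻¹) volume x t :=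
  (intervalIntegral.intervalIntegrable_inv (fun u hu => by
    rw [uIcc_of_le hxt] at hu; exact (hx.trans_le hu.1).ne') continuousOn_id).const_mul c

lemma integral_inv_le_of_mul_le (hv : ∀ u, 0 < v u) (hmono : Monotone v) {c x t : ℝ}
    (hc : 0 < c) (hx : 0 < x) (hxt : x ≤ t) (h : ∀ u ∈ Icc x t, c * u ≤ v u) :
    ∫ u in x..t, (v u)⁻¹ ≤ c⁻¹ * log (t / x) := by
  rw [← integral_const_mul_inv _ hx hxt]
  refine intervalIntegral.integral_mono_on hxt (intervalIntegrable_inv_of_monotone hv hmono x t)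
    (intervalIntegrable_const_mul_inv _ hx hxt) fun u hu => ?_
  rw [← mul_inv]
  exact inv_anti₀ (mul_pos hc (hx.trans_le hu.1)) (h u hu)

lemma le_integral_inv_of_le_mul (hv : ∀ u, 0 < v u) (hmono : Monotone v) {c x t : ℝ}
    (hx : 0 < x) (hxt : x ≤ t) (h : ∀ u ∈ Icc x t, v u ≤ c * u) :
    c⁻¹ * log (t / x) ≤ ∫ u in x..t, (v u)⁻¹ := by
  rw [← integral_const_mul_inv _ hx hxt]
  refine intervalIntegral.integral_mono_on hxt (intervalIntegrable_const_mul_inv _ hx hxt)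
    (intervalIntegrable_inv_of_monotone hv hmono x t) fun u hu => ?_
  rw [← mul_inv]
  exact inv_anti₀ (hv u) (h u hu)

end Wfun

section Ia

variable {v Winv : ℝ → ℝ}

lemma inv_apply_Winv_le_of_mul_log_log_le (hv : ∀ u, 0 < v u) (hmono : Monotone v)
    (hWinv' : ∀ y, 0 ≤ y → Wfun v (Winv y) = y) {K M α x : ℝ} (hK : 0 < K) (hα : 0 ≤ α)
    (hM : exp (exp 1) ≤ M) (hlow : ∀ u, M ≤ u → K * (u * log (log u)) ≤ v u) (hx : M ≤ x) :
    (v (Winv (Wfun v x + α)))⁻¹ ≤ K⁻¹ * (x⁻¹ * log x ^ (-(K * α))) := by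
  have hx' : exp (exp 1) ≤ x := hM.trans hx
  have hx0 : 0 < x := (exp_pos _).trans_le hx'
  have hx1 : 1 < x := one_lt_exp_iff.2 (exp_pos 1) |>.trans_le hx'
  have hlogx : 1 ≤ log x := one_le_log hx'
  have hL : 0 < log (log x) := one_pos.trans_le (one_le_log_log hx')
  set t := x * log x ^ (K * α) with ht
  have hxt : x ≤ t := le_mul_of_one_le_right hx0.le (one_le_rpow hlogx (by positivity))
  have hint : ∫ u in x..t, (v u)⁻¹ ≤ α := by
    calc ∫ u in x..t, (v u)⁻¹ ≤ (K * log (log x))⁻¹ * log (t / x) := by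
          refine integral_inv_le_of_mul_le hv hmono (by positivity) hx0 hxt fun u hu => ?_
          calc K * log (log x) * u = K * (u * log (log x)) := by ring
            _ ≤ K * (u * log (log u)) := by
              gcongr K * (u * ?_)
              · exact hx0.le.trans hu.1
              · exact log_log_le_log_log hx1 hu.1
            _ ≤ v u := hlow u (hx.trans hu.1)
      _ = α := by
          rw [ht, mul_div_cancel_left₀ _ hx0.ne', log_rpow (by linarith)]
          field_simp
  have hty : t ≤ Winv (Wfun v x + α) := le_Winv_of_integral_le hv hmono hWinv' hx0.le hα hint
  have hvt : K * t ≤ v t :=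
    calc K * t ≤ K * (t * log (log t)) := by
          gcongr
          exact le_mul_of_one_le_right (by positivity) (one_le_log_log (hx'.trans hxt))
      _ ≤ v t := hlow t (hx.trans hxt)
  calc (v (Winv (Wfun v x + α)))⁻¹ ≤ (K * t)⁻¹ :=
        inv_anti₀ (by positivity) (hvt.trans (hmono hty))
    _ = K⁻¹ * (x⁻¹ * log x ^ (-(K * α))) := by
        rw [ht, rpow_neg (by linarith), mul_inv, mul_inv]

lemma inv_le_inv_apply_Winv_of_le_mul_log_log (hv : ∀ u, 0 < v u) (hmono : Monotone v)
    (hWinv' : ∀ y, 0 ≤ y → Wfun v (Winv y) = y) {ε M α x : ℝ} (hε : 0 < ε) (hα : 0 ≤ α)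
    (hεα : 2 * ε * α ≤ 1) (hM : exp (exp 1) ≤ M)
    (hup : ∀ u, M ≤ u → v u ≤ ε * (u * log (log u))) (hx : M ≤ x) :
    (2 * ε * log (log x) * (x * log x ^ (2 * ε * α)))⁻¹ ≤ (v (Winv (Wfun v x + α)))⁻¹ := by
  have hx' : exp (exp 1) ≤ x := hM.trans hx
  have hx0 : 0 < x := (exp_pos _).trans_le hx'
  have hx1 : 1 < x := one_lt_exp_iff.2 (exp_pos 1) |>.trans_le hx'
  have hlogx : 1 ≤ log x := one_le_log hx'
  have hL : 0 < log (log x) := one_pos.trans_le (one_le_log_log hx')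
  set c := 2 * ε * log (log x) with hc
  set t := x * log x ^ (2 * ε * α) with ht
  have hxt : x ≤ t := le_mul_of_one_le_right hx0.le (one_le_rpow hlogx (by positivity))
  have htx : t ≤ x ^ 2 := by
    have : log x ^ (2 * ε * α) ≤ x :=
      calc log x ^ (2 * ε * α) ≤ log x ^ (1 : ℝ) := rpow_le_rpow_of_exponent_le hlogx hεα
        _ ≤ x := by rw [rpow_one]; exact log_le_self hx0.le
    rw [ht, sq]
    gcongr
  have hbound : ∀ u ∈ Icc x t, v u ≤ c * u := fun u hu =>
    calc v u ≤ ε * (u * log (log u)) := hup u (hx.trans hu.1)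
      _ ≤ ε * (u * (2 * log (log x))) := by
          gcongr ε * (u * ?_)
          · exact hx0.le.trans hu.1
          · exact log_log_le_two_mul_log_log hx' (by linarith [hu.1]) (hu.2.trans htx)
      _ = c * u := by ring
  have hint : α ≤ ∫ u in x..t, (v u)⁻¹ :=
    calc α = c⁻¹ * log (t / x) := by
          rw [ht, mul_div_cancel_left₀ _ hx0.ne', log_rpow (by linarith), hc]
          field_simp
      _ ≤ ∫ u in x..t, (v u)⁻¹ := le_integral_inv_of_le_mul hv hmono hx0 hxt hbound
  have hyt : Winv (Wfun v x + α) ≤ t := Winv_le_of_le_integral hv hmono hWinv' hx0.le hα hint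
  calc (c * t)⁻¹ ≤ (v t)⁻¹ := inv_anti₀ (hv t) (hbound t ⟨hxt, le_rfl⟩)
    _ ≤ (v (Winv (Wfun v x + α)))⁻¹ := inv_anti₀ (hv _) (hmono hyt)

lemma Ia_lt_top_of_le (hv : ∀ u, 0 < v u) (hmono : Monotone v)
    (hWinv' : ∀ y, 0 ≤ y → Wfun v (Winv y) = y) {α M : ℝ} {g : ℝ → ℝ} (hα : 0 ≤ α)
    (hg : IntegrableOn g (Ioi M)) (h : ∀ x > M, (v (Winv (Wfun v x + α)))⁻¹ ≤ g x) :
    Ia v Winv α < ⊤ := by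
  have hsub : Ioi (0 : ℝ) ⊆ Ioc 0 M ∪ Ioi M := fun x hx =>
    (le_or_gt x M).imp (fun h => ⟨hx, h⟩) id
  have hbdd : ∀ x ∈ Ioc (0 : ℝ) M, ENNReal.ofReal (v (Winv (Wfun v x + α)))⁻¹
      ≤ ENNReal.ofReal (v 0)⁻¹ := fun x hx =>
    ENNReal.ofReal_le_ofReal <| inv_anti₀ (hv 0) <| hmono <|
      Winv_nonneg hv hmono hWinv' (add_nonneg (Wfun_nonneg_s8 hv hx.1.le) hα)
  calc Ia v Winv α
      ≤ (∫⁻ x in Ioc 0 M, ENNReal.ofReal (v (Winv (Wfun v x + α)))⁻¹)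
        + ∫⁻ x in Ioi M, ENNReal.ofReal (v (Winv (Wfun v x + α)))⁻¹ :=
        (lintegral_mono_set hsub).trans (lintegral_union_le _ _ _)
    _ ≤ (∫⁻ _ in Ioc 0 M, ENNReal.ofReal (v 0)⁻¹) + ∫⁻ x in Ioi M, ENNReal.ofReal (g x) :=
        add_le_add (setLIntegral_mono' measurableSet_Ioc hbdd)
          (setLIntegral_mono' measurableSet_Ioi fun x hx => ENNReal.ofReal_le_ofReal (h x hx))
    _ < ⊤ := by
        rw [setLIntegral_const]
        exact ENNReal.add_lt_top.2
          ⟨ENNReal.mul_lt_top ENNReal.ofReal_lt_top measure_Ioc_lt_top, hg.lintegral_lt_top⟩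

lemma Ia_eq_top_of_le {α M c : ℝ} {g : ℝ → ℝ} (hM : 0 ≤ M) (hc : 0 < c)
    (hg : ∫⁻ x in Ioi M, ENNReal.ofReal (g x) = ⊤)
    (h : ∀ x > M, c * g x ≤ (v (Winv (Wfun v x + α)))⁻¹) : Ia v Winv α = ⊤ := by
  refine top_le_iff.1 ?_
  calc ⊤ = ENNReal.ofReal c * ∫⁻ x in Ioi M, ENNReal.ofReal (g x) := by
        rw [hg, ENNReal.mul_top (ENNReal.ofReal_pos.2 hc).ne']
    _ = ∫⁻ x in Ioi M, ENNReal.ofReal (c * g x) := by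
        rw [← lintegral_const_mul' _ _ ENNReal.ofReal_ne_top]
        simp_rw [ENNReal.ofReal_mul hc.le]
    _ ≤ ∫⁻ x in Ioi M, ENNReal.ofReal (v (Winv (Wfun v x + α)))⁻¹ :=
        setLIntegral_mono' measurableSet_Ioi fun x hx => ENNReal.ofReal_le_ofReal (h x hx)
    _ ≤ Ia v Winv α := lintegral_mono_set (Ioi_subset_Ioi hM)

lemma Ia_lt_top_of_eventually_mul_log_log_le (hv : ∀ u, 0 < v u) (hmono : Monotone v)
    (hWinv' : ∀ y, 0 ≤ y → Wfun v (Winv y) = y) {K α : ℝ} (hK : 0 < K) (hKα : 1 < K * α)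
    (hlow : ∀ᶠ u in atTop, K * (u * log (log u)) ≤ v u) : Ia v Winv α < ⊤ := by
  obtain ⟨M, hM⟩ := (hlow.and (eventually_ge_atTop (exp (exp 1)))).exists_forall_of_atTop
  have hM' : exp (exp 1) ≤ M := (hM M le_rfl).2
  have hα : 0 ≤ α := (pos_of_mul_pos_right (one_pos.trans hKα) hK.le).le
  have hg : IntegrableOn (fun x => K⁻¹ * (x⁻¹ * log x ^ (-(K * α)))) (Ioi M) :=
    ((integrableOn_Ioi_inv_mul_log_rpow_iff (one_lt_exp_iff.2 (exp_pos 1) |>.trans_le hM')).2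
      (by linarith)).const_mul _
  exact Ia_lt_top_of_le hv hmono hWinv' hα hg fun x hx =>
    inv_apply_Winv_le_of_mul_log_log_le hv hmono hWinv' hK hα hM' (fun u hu => (hM u hu).1) hx.le

lemma Ia_eq_top_of_eventually_le_mul_log_log (hv : ∀ u, 0 < v u) (hmono : Monotone v)
    (hWinv' : ∀ y, 0 ≤ y → Wfun v (Winv y) = y) {ε α : ℝ} (hε : 0 < ε) (hα : 0 ≤ α)
    (hεα : 2 * ε * α < 1) (hup : ∀ᶠ u in atTop, v u ≤ ε * (u * log (log u))) :
    Ia v Winv α = ⊤ := by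
  obtain ⟨M, hM⟩ := (hup.and (eventually_ge_atTop (exp (exp 1)))).exists_forall_of_atTop
  have hM' : exp (exp 1) ≤ M := (hM M le_rfl).2
  have hM1 : 1 < M := one_lt_exp_iff.2 (exp_pos 1) |>.trans_le hM'
  set δ := 2 * ε * α
  set s := (1 - δ) / 2 with hs_def
  have hs : 0 < s := by linarith
  -- `log (log x) ≤ log x ^ s / s` absorbs the factor `log log x`, the total exponent staying `< 1`
  refine Ia_eq_top_of_le (c := s / (2 * ε)) (by linarith) (by positivity)
    (lintegral_Ioi_inv_mul_log_rpow_eq_top hM1 (s := -(δ + s)) (by linarith)) fun x hx => ?_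
  have hx0 : 0 < x := by linarith
  have hlogx : 0 < log x := log_pos (by linarith)
  refine le_trans ?_ (inv_le_inv_apply_Winv_of_le_mul_log_log hv hmono hWinv' hε hα hεα.le hM'
    (fun u hu => (hM u hu).1) hx.le)
  calc s / (2 * ε) * (x⁻¹ * log x ^ (-(δ + s)))
      = (2 * ε * (log x ^ s / s) * (x * log x ^ δ))⁻¹ := by
        rw [rpow_neg hlogx.le, rpow_add hlogx]
        field_simp
    _ ≤ (2 * ε * log (log x) * (x * log x ^ δ))⁻¹ := by
        have hL : 0 < log (log x) := one_pos.trans_le (one_le_log_log (hM'.trans hx.le))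
        gcongr
        exact log_le_rpow_div hlogx.le hs

end Ia

section alphac

variable {v Winv : ℝ → ℝ}

lemma alphac_le_ofReal {α : ℝ} (hα : 0 < α) (h : Ia v Winv α < ⊤) :
    alphac v Winv ≤ ENNReal.ofReal α :=
  sInf_le ⟨α, ⟨hα, h⟩, rfl⟩

lemma ofReal_le_alphac {a : ℝ} (h : ∀ α, 0 < α → α < a → Ia v Winv α = ⊤) :
    ENNReal.ofReal a ≤ alphac v Winv := by
  refine le_sInf ?_
  rintro _ ⟨α, ⟨hα, hfin⟩, rfl⟩
  exact ENNReal.ofReal_le_ofReal (le_of_not_gt fun hlt => hfin.ne (h α hα hlt))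

lemma alphac_eq_zero (h : ∀ α, 0 < α → Ia v Winv α < ⊤) : alphac v Winv = 0 :=
  nonpos_iff_eq_zero.1 <| ENNReal.le_of_forall_pos_le_add fun ε hε _ => by
    simpa using alphac_le_ofReal (NNReal.coe_pos.2 hε) (h ε hε)

lemma alphac_eq_top (h : ∀ α, 0 < α → Ia v Winv α = ⊤) : alphac v Winv = ⊤ := by
  refine sInf_eq_top.2 ?_
  rintro _ ⟨α, ⟨hα, hfin⟩, rfl⟩
  exact absurd (h α hα) hfin.ne

end alphac

section wext

variable {w : ℕ → ℝ}

lemma eventually_mul_le_wext {C : ℝ} (hC : 0 ≤ C)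
    (h : ∀ᶠ n : ℕ in atTop, C * (n * log (log n)) ≤ w n) :
    ∀ᶠ u in atTop, C / 4 * (u * log (log u)) ≤ wext w u := by
  filter_upwards [tendsto_nat_floor_atTop.eventually h, eventually_mul_log_log_le_floor]
    with u hw hu
  calc C / 4 * (u * log (log u)) ≤ C / 4 * (4 * (⌊u⌋₊ * log (log ⌊u⌋₊))) := by gcongr
    _ = C * (⌊u⌋₊ * log (log ⌊u⌋₊)) := by ring
    _ ≤ wext w u := hw

lemma eventually_wext_le_mul {c : ℝ} (hc : 0 ≤ c)
    (h : ∀ᶠ n : ℕ in atTop, w n ≤ c * (n * log (log n))) :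
    ∀ᶠ u in atTop, wext w u ≤ c * (u * log (log u)) := by
  filter_upwards [tendsto_nat_floor_atTop.eventually h, eventually_floor_mul_log_log_le]
    with u hw hu
  exact hw.trans (by gcongr)

end wext

theorem stmt8_general (w : ℕ → ℝ) (hpos : ∀ n, 0 < w n) (hmono : Monotone w)
    (Winv : ℝ → ℝ)
    (hWinv' : ∀ y : ℝ, 0 ≤ y → Wfun (wext w) (Winv y) = y) :
    (Tendsto (fun n : ℕ => w n / (n * Real.log (Real.log n))) atTop atTop →
        alphac (wext w) Winv = 0) ∧
    ((∃ c : ℝ, 0 < c ∧ ∀ᶠ n : ℕ in atTop,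
        c⁻¹ * (n * Real.log (Real.log n)) ≤ w n ∧
        w n ≤ c * (n * Real.log (Real.log n))) →
        0 < alphac (wext w) Winv ∧ alphac (wext w) Winv < ⊤) ∧
    (Tendsto (fun n : ℕ => w n / (n * Real.log (Real.log n))) atTop (nhds 0) →
        alphac (wext w) Winv = ⊤) := by
  have hv : ∀ u, 0 < wext w u := fun u => hpos _
  have hvmono : Monotone (wext w) := fun _ _ h => hmono (Nat.floor_le_floor h)
  have hg := tendsto_natCast_atTop_atTop.eventually eventually_pos_mul_log_log
  refine ⟨fun h => ?_, fun ⟨c, hc, h⟩ => ?_, fun h => ?_⟩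
  · refine alphac_eq_zero fun α hα =>
      Ia_lt_top_of_eventually_mul_log_log_le hv hvmono hWinv' (K := 8 / α / 4) (by positivity)
        (by field_simp; norm_num) ?_
    exact eventually_mul_le_wext (by positivity) (eventually_mul_le_of_tendsto_div_atTop hg h _)
  · have hlow := eventually_mul_le_wext (inv_pos.2 hc).le (h.mono fun _ hn => hn.1)
    have hup := eventually_wext_le_mul hc.le (h.mono fun _ hn => hn.2)
    have hfin : Ia (wext w) Winv (8 * c) < ⊤ :=
      Ia_lt_top_of_eventually_mul_log_log_le hv hvmono hWinv' (by positivity)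
        (by field_simp; norm_num) hlow
    have hinf : ∀ α, 0 < α → α < 1 / (2 * c) → Ia (wext w) Winv α = ⊤ := fun α hα hαc =>
      Ia_eq_top_of_eventually_le_mul_log_log hv hvmono hWinv' hc hα.le
        (by rw [lt_div_iff₀ (by positivity)] at hαc; linarith) hup
    exact ⟨(ENNReal.ofReal_pos.2 (by positivity)).trans_le (ofReal_le_alphac hinf),
      (alphac_le_ofReal (by positivity) hfin).trans_lt ENNReal.ofReal_lt_top⟩
  · refine alphac_eq_top fun α hα => Ia_eq_top_of_eventually_le_mul_log_log hv hvmono hWinv'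
      (ε := 1 / (4 * α)) (by positivity) hα.le (by field_simp; norm_num) ?_
    exact eventually_wext_le_mul (by positivity)
      (eventually_le_mul_of_tendsto_div_zero hg h (by positivity))

/-- comparison of `w(n)` with `n log log n`: if `w(n)/(n log log n) → ∞` then
`α_c(w) = 0`; if `c⁻¹ n log log n ≤ w(n) ≤ c n log log n` for large `n` then
`α_c(w) ∈ (0,∞)`; if `w(n)/(n log log n) → 0` then `α_c(w) = ∞`. -/
theorem stmt8 (w : ℕ → ℝ) (hpos : ∀ n, 0 < w n) (hmono : Monotone w)
    (hdiv : ¬ Summable (fun n : ℕ => (w n)⁻¹))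
    (Winv : ℝ → ℝ)
    (hWinv : ∀ t : ℝ, 0 ≤ t → Winv (Wfun (wext w) t) = t)
    (hWinv' : ∀ y : ℝ, 0 ≤ y → Wfun (wext w) (Winv y) = y) :
    (Tendsto (fun n : ℕ => w n / (n * Real.log (Real.log n))) atTop atTop →
        alphac (wext w) Winv = 0) ∧
    ((∃ c : ℝ, 0 < c ∧ ∀ᶠ n : ℕ in atTop,
        c⁻¹ * (n * Real.log (Real.log n)) ≤ w n ∧
        w n ≤ c * (n * Real.log (Real.log n))) →
        0 < alphac (wext w) Winv ∧ alphac (wext w) Winv < ⊤) ∧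
    (Tendsto (fun n : ℕ => w n / (n * Real.log (Real.log n))) atTop (nhds 0) →
        alphac (wext w) Winv = ⊤) :=
  stmt8_general w hpos hmono Winv hWinv'
end
end
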